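/- Let S ⊆ ℕ^d be a C-semigroup with H(S) ≠ ∅, and let x ∈ S be nonzero (for instance a minimal extremal ray of S). Then the reduced type s(S,x) = |𝔠_S ∩ Maximals_{≤_S} Ap(S,{x})| equals 1 if and only if H(S) has a greatest element F with respect to ≤_{C(S)} and for every f ∈ PF(S) \ {F} there exists c ∈ C(S) with f + x + c = F (i.e. f ≤_{C(S)} F − x). Consequently, S has minimal reduced type (s(S,n) = 1 for every minimal extremal ray n) exactly when this condition holds for every minimal extremal ray. -/

import Mathlib

/-! Common definitions for C-semigroups in `ℕ^d = Fin d → ℕ`. -/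

/-- `x ≤_L y` iff `y = x + l` for some `l ∈ L`. -/
def leL {M : Type*} [AddCommMonoid M] (L : Set M) (x y : M) : Prop :=
  ∃ l ∈ L, y = x + l

/-- Elements of `A` maximal with respect to `≤_L`. -/
def maximalsL {M : Type*} [AddCommMonoid M] (L A : Set M) : Set M :=
  {a | a ∈ A ∧ ∀ b ∈ A, leL L a b → a = b}

/-- The Apéry set of `S` with respect to `X`. -/
def aperySet {M : Type*} [AddCommMonoid M] (S : AddSubmonoid M) (X : Set M) : Set M :=
  {s | s ∈ S ∧ ¬ ∃ x ∈ X, ∃ t ∈ S, s = t + x}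

/-- Integer points of the rational cone spanned by `S`. -/
def coneSet {d : ℕ} (S : AddSubmonoid (Fin d → ℕ)) : Set (Fin d → ℕ) :=
  {x | ∃ (n : ℕ) (c : Fin n → ℚ) (s : Fin n → (Fin d → ℕ)),
      (∀ i, 0 ≤ c i) ∧ (∀ i, s i ∈ S) ∧ ∀ j, (x j : ℚ) = ∑ i, c i * (s i j : ℚ)}

/-- The set of gaps `H(S) = C(S) \ S`. -/
def gapSet {d : ℕ} (S : AddSubmonoid (Fin d → ℕ)) : Set (Fin d → ℕ) :=
  coneSet S \ (S : Set (Fin d → ℕ))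

/-- Pseudo-Frobenius elements of `S`. -/
def pseudoFrobenius {d : ℕ} (S : AddSubmonoid (Fin d → ℕ)) : Set (Fin d → ℕ) :=
  {h | h ∈ gapSet S ∧ ∀ s ∈ S, s ≠ 0 → h + s ∈ S}

/-- Special gaps of `S`. -/
def specialGaps {d : ℕ} (S : AddSubmonoid (Fin d → ℕ)) : Set (Fin d → ℕ) :=
  {h | h ∈ pseudoFrobenius S ∧ h + h ∈ S}

/-- The conductor of `S`. -/
def conductorSet {d : ℕ} (S : AddSubmonoid (Fin d → ℕ)) : Set (Fin d → ℕ) :=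
  {s | s ∈ S ∧ ∀ c ∈ coneSet S, s + c ∈ S}

/-- A relaxed monomial order on `ℕ^d`. -/
structure RelaxedMonomialOrder (d : ℕ) where
  le : (Fin d → ℕ) → (Fin d → ℕ) → Prop
  isLinearOrder : IsLinearOrder (Fin d → ℕ) le
  zero_le : ∀ v, le 0 v
  le_add_right : ∀ u v w, le u v → le u (v + w)

/-- A term order on `ℕ^d`. -/
structure TermOrderOn (d : ℕ) where
  le : (Fin d → ℕ) → (Fin d → ℕ) → Prop
  isLinearOrder : IsLinearOrder (Fin d → ℕ) le
  zero_le : ∀ v, le 0 v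
  add_le_add_right : ∀ u v w, le u v → le (u + w) (v + w)

/-- Frobenius allowable elements of a C-semigroup `S`. -/
def frobAllowable {d : ℕ} (S : AddSubmonoid (Fin d → ℕ)) : Set (Fin d → ℕ) :=
  {h | h ∈ gapSet S ∧ ∃ o : RelaxedMonomialOrder d, ∀ x ∈ gapSet S, o.le x h}

/-- Pseudo-Frobenius elements, complement version (for generalized numerical semigroups). -/
def PFmonoid {M : Type*} [AddCommMonoid M] (S : AddSubmonoid M) : Set M :=
  {h | h ∉ S ∧ ∀ s ∈ S, s ≠ 0 → h + s ∈ S}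

/-- Conductor, complement version (for generalized numerical semigroups). -/
def conductorMonoid {M : Type*} [AddCommMonoid M] (S : AddSubmonoid M) : Set M :=
  {s | s ∈ S ∧ ∀ n : M, s + n ∈ S}

/-- Frobenius allowable elements, complement version (for generalized numerical semigroups). -/
def FAmonoid {d : ℕ} (S : AddSubmonoid (Fin d → ℕ)) : Set (Fin d → ℕ) :=
  {h | h ∉ S ∧ ∃ o : RelaxedMonomialOrder d, ∀ x, x ∉ S → o.le x h}

namespace CS12aux

variable {d : ℕ}


variable {d : ℕ}

lemma rat_clear (q : ℚ) (hq : 0 ≤ q) (M : ℕ) (hdvd : q.den ∣ M) :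
    ∃ n : ℕ, (n : ℚ) = q * M := by
  obtain ⟨m, hm⟩ := hdvd
  refine ⟨q.num.toNat * m, ?_⟩
  have h1 : ((q.num.toNat : ℤ) : ℚ) = (q.num : ℚ) := by
    rw [Int.toNat_of_nonneg (Rat.num_nonneg.mpr hq)]
  have hden : ((q.den : ℚ)) ≠ 0 := by
    exact_mod_cast q.den_nz
  have hq1 : (q.den : ℚ) * q = (q.num : ℚ) := by
    exact_mod_cast @Rat.den_mul_eq_num q
  have h2 : q * (M : ℚ) = (q.num : ℚ) * m := by
    rw [hm]
    push_cast
    rw [mul_comm q ((q.den:ℚ) * (m:ℚ)), mul_assoc, mul_comm (m:ℚ) q, ← mul_assoc, hq1]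
  have h1' : ((q.num.toNat : ℕ) : ℚ) = (q.num : ℚ) := by exact_mod_cast h1
  push_cast
  rw [h1', h2]

lemma mem_coneSet_iff {S : AddSubmonoid (Fin d → ℕ)} {y : Fin d → ℕ} :
    y ∈ coneSet S ↔ ∃ M : ℕ, 0 < M ∧ M • y ∈ S := by
  constructor
  · rintro ⟨n, c, s, hc, hsS, hrep⟩
    classical
    set M : ℕ := ∏ i : Fin n, (c i).den with hMdef
    have hM : 0 < M := Finset.prod_pos (fun i _ => (c i).pos)
    have hex : ∀ i : Fin n, ∃ m : ℕ, (m : ℚ) = c i * M := by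
      intro i
      exact rat_clear (c i) (hc i) M (Finset.dvd_prod_of_mem _ (Finset.mem_univ i))
    choose m hm using hex
    refine ⟨M, hM, ?_⟩
    have hz : M • y = ∑ i : Fin n, m i • s i := by
      funext j
      have hcast : (((∑ i : Fin n, m i • s i) j : ℕ) : ℚ)
          = ∑ i : Fin n, (m i : ℚ) * (s i j : ℚ) := by
        rw [Finset.sum_apply]
        push_cast
        refine Finset.sum_congr rfl (fun i _ => by simp [Pi.smul_apply])
      have : ((M • y) j : ℚ) = (((∑ i : Fin n, m i • s i) j : ℕ) : ℚ) := by
        rw [hcast]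
        have : ((M • y) j : ℚ) = (M : ℚ) * (y j : ℚ) := by
          simp [Pi.smul_apply]
        rw [this, hrep j, Finset.mul_sum]
        refine Finset.sum_congr rfl (fun i _ => ?_)
        rw [hm i]
        ring
      exact_mod_cast this
    rw [hz]
    exact AddSubmonoid.sum_mem S (fun i _ => AddSubmonoid.nsmul_mem S (hsS i) (m i))
  · rintro ⟨M, hM, hMy⟩
    refine ⟨1, fun _ => (M : ℚ)⁻¹, fun _ => M • y, fun _ => by positivity, fun _ => hMy, ?_⟩
    intro j
    rw [Fin.sum_univ_one]
    have hMne : (M : ℚ) ≠ 0 := by positivity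
    have : ((M • y) j : ℚ) = (M : ℚ) * (y j : ℚ) := by
      simp [Pi.smul_apply]
    rw [this]
    field_simp

lemma cone_zero {S : AddSubmonoid (Fin d → ℕ)} : (0 : Fin d → ℕ) ∈ coneSet S :=
  mem_coneSet_iff.mpr ⟨1, one_pos, by simpa using S.zero_mem⟩

lemma subset_cone {S : AddSubmonoid (Fin d → ℕ)} {s : Fin d → ℕ} (hs : s ∈ S) :
    s ∈ coneSet S :=
  mem_coneSet_iff.mpr ⟨1, one_pos, by simpa using hs⟩

lemma cone_add {S : AddSubmonoid (Fin d → ℕ)} {a b : Fin d → ℕ}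
    (ha : a ∈ coneSet S) (hb : b ∈ coneSet S) : a + b ∈ coneSet S := by
  obtain ⟨M₁, hM₁, h₁⟩ := mem_coneSet_iff.mp ha
  obtain ⟨M₂, hM₂, h₂⟩ := mem_coneSet_iff.mp hb
  refine mem_coneSet_iff.mpr ⟨M₁ * M₂, Nat.mul_pos hM₁ hM₂, ?_⟩
  have : (M₁ * M₂) • (a + b) = M₂ • (M₁ • a) + M₁ • (M₂ • b) := by
    rw [smul_add, ← mul_smul, ← mul_smul, mul_comm M₂ M₁]
  rw [this]
  exact S.add_mem (AddSubmonoid.nsmul_mem S h₁ M₂) (AddSubmonoid.nsmul_mem S h₂ M₁)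




lemma pi_add_eq_zero {a b : Fin d → ℕ} (h : a + b = 0) : a = 0 := by
  funext j
  have := congrFun h j
  simp only [Pi.add_apply, Pi.zero_apply] at this ⊢
  omega

lemma leL_refl {C : Set (Fin d → ℕ)} (h0 : (0 : Fin d → ℕ) ∈ C) (a : Fin d → ℕ) :
    leL C a a := ⟨0, h0, (add_zero a).symm⟩

lemma leL_trans {C : Set (Fin d → ℕ)} (hadd : ∀ a b, a ∈ C → b ∈ C → a + b ∈ C)
    {a b c : Fin d → ℕ} (h1 : leL C a b) (h2 : leL C b c) : leL C a c := by
  obtain ⟨l, hl, rfl⟩ := h1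
  obtain ⟨l', hl', rfl⟩ := h2
  exact ⟨l + l', hadd _ _ hl hl', add_assoc a l l'⟩

lemma leL_antisymm {C : Set (Fin d → ℕ)} {a b : Fin d → ℕ}
    (h1 : leL C a b) (h2 : leL C b a) : a = b := by
  obtain ⟨l, hl, rfl⟩ := h1
  obtain ⟨l', hl', h⟩ := h2
  have : l + l' = 0 := by
    funext j
    have := congrFun h j
    simp only [Pi.add_apply, Pi.zero_apply] at this ⊢
    omega
  have hl0 : l = 0 := pi_add_eq_zero this
  rw [hl0, add_zero]

/-- Existence of maximal elements in a finite set w.r.t. `leL C`. -/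
lemma exists_maximal {C A : Set (Fin d → ℕ)} (h0 : (0 : Fin d → ℕ) ∈ C)
    (hadd : ∀ a b, a ∈ C → b ∈ C → a + b ∈ C) (hA : A.Finite) :
    ∀ a ∈ A, ∃ m ∈ A, leL C a m ∧ ∀ b ∈ A, leL C m b → m = b := by
  classical
  suffices key : ∀ n : ℕ, ∀ a ∈ A,
      (hA.toFinset.filter (fun b => leL C a b ∧ a ≠ b)).card ≤ n →
      ∃ m ∈ A, leL C a m ∧ ∀ b ∈ A, leL C m b → m = b by
    intro a ha
    exact key _ a ha le_rfl
  intro n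
  induction n with
  | zero =>
    intro a ha hcard
    refine ⟨a, ha, leL_refl h0 a, ?_⟩
    intro b hb hab
    by_contra hne
    have hbmem : b ∈ hA.toFinset.filter (fun b => leL C a b ∧ a ≠ b) := by
      simp only [Finset.mem_filter, Set.Finite.mem_toFinset]
      exact ⟨hb, hab, hne⟩
    have := Finset.card_pos.mpr ⟨b, hbmem⟩
    omega
  | succ n ih =>
    intro a ha hcard
    by_cases hex : ∃ b ∈ A, leL C a b ∧ a ≠ b
    · obtain ⟨b, hb, hab, hne⟩ := hex
      have hssub : (hA.toFinset.filter (fun c => leL C b c ∧ b ≠ c)) ⊂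
          (hA.toFinset.filter (fun c => leL C a c ∧ a ≠ c)) := by
        constructor
        · intro c hc
          simp only [Finset.mem_filter, Set.Finite.mem_toFinset] at hc ⊢
          refine ⟨hc.1, leL_trans hadd hab hc.2.1, ?_⟩
          rintro rfl
          exact hne (leL_antisymm hab hc.2.1)
        · intro hsub
          have hbmem : b ∈ hA.toFinset.filter (fun c => leL C a c ∧ a ≠ c) := by
            simp only [Finset.mem_filter, Set.Finite.mem_toFinset]
            exact ⟨hb, hab, hne⟩
          have := hsub hbmem
          simp only [Finset.mem_filter] at this
          exact this.2.2 rfl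
      have hlt := Finset.card_lt_card hssub
      obtain ⟨m, hm, hbm, hmax⟩ := ih b hb (by omega)
      exact ⟨m, hm, leL_trans hadd hab hbm, hmax⟩
    · push_neg at hex
      refine ⟨a, ha, leL_refl h0 a, ?_⟩
      intro b hb hab
      by_contra hne
      exact hne (hex b hb hab)

lemma mem_fg_combo (G : Finset (Fin d → ℕ)) {y : Fin d → ℕ}
    (hy : y ∈ AddSubmonoid.closure (G : Set (Fin d → ℕ))) :
    ∃ c : (Fin d → ℕ) → ℕ, y = ∑ g ∈ G, c g • g := by
  classical
  induction hy using AddSubmonoid.closure_induction with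
  | mem g hg =>
    refine ⟨fun g' => if g' = g then 1 else 0, ?_⟩
    simp only [ite_smul, zero_smul, one_smul]
    rw [Finset.sum_ite_eq' G g (fun g' => g')]
    simp only [Finset.mem_coe] at hg
    simp [hg]
  | zero => exact ⟨fun _ => 0, by simp⟩
  | add a b _ _ iha ihb =>
    obtain ⟨c₁, hc₁⟩ := iha
    obtain ⟨c₂, hc₂⟩ := ihb
    refine ⟨c₁ + c₂, ?_⟩
    rw [hc₁, hc₂, ← Finset.sum_add_distrib]
    refine Finset.sum_congr rfl (fun g _ => ?_)
    simp [add_smul]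




def castV {d : ℕ} (v : Fin d → ℕ) : Fin d → ℚ := fun j => (v j : ℚ)

lemma castV_inj : Function.Injective (castV (d := d)) := by
  intro a b h
  funext j
  have := congrFun h j
  simpa [castV] using this

/-- Any nonnegative combination can be re-expressed over an "independent" subset. -/
lemma reduce (y : Fin d → ℚ) (I : Finset (Fin d → ℚ)) :
    ∀ c : (Fin d → ℚ) → ℚ, (∀ v ∈ I, 0 ≤ c v) → y = ∑ v ∈ I, c v • v →
    ∃ J, J ⊆ I ∧
      (∀ g : (Fin d → ℚ) → ℚ, ∑ v ∈ J, g v • v = 0 → ∀ v ∈ J, g v = 0) ∧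
      ∃ c' : (Fin d → ℚ) → ℚ, (∀ v ∈ J, 0 ≤ c' v) ∧ y = ∑ v ∈ J, c' v • v := by
  classical
  induction I using Finset.strongInduction with
  | _ I ih =>
    intro c hc hy
    by_cases hind : ∀ g : (Fin d → ℚ) → ℚ, ∑ v ∈ I, g v • v = 0 → ∀ v ∈ I, g v = 0
    · exact ⟨I, Finset.Subset.refl I, hind, c, hc, hy⟩
    · push_neg at hind
      obtain ⟨g₀, hg₀sum, v₁, hv₁I, hv₁ne⟩ := hind
      -- arrange a relation with a positive coefficient somewhere
      have hrel : ∃ g : (Fin d → ℚ) → ℚ, (∑ v ∈ I, g v • v = 0) ∧ ∃ v ∈ I, 0 < g v := by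
        by_cases hp : ∃ v ∈ I, 0 < g₀ v
        · exact ⟨g₀, hg₀sum, hp⟩
        · push_neg at hp
          refine ⟨fun v => -g₀ v, ?_, v₁, hv₁I, ?_⟩
          · rw [← neg_eq_zero, ← Finset.sum_neg_distrib]
            rw [← hg₀sum]
            refine Finset.sum_congr rfl (fun v _ => ?_)
            rw [neg_smul, neg_neg]
          · have h1 := hp v₁ hv₁I
            have h2 : g₀ v₁ < 0 := lt_of_le_of_ne h1 hv₁ne
            show 0 < -g₀ v₁
            linarith
      obtain ⟨g, hgsum, v₁', hv₁'I, hv₁'pos⟩ := hrel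
      set P : Finset (Fin d → ℚ) := I.filter (fun v => 0 < g v) with hP
      have hPne : P.Nonempty := ⟨v₁', by simp [hP, hv₁'I, hv₁'pos]⟩
      obtain ⟨v₀, hv₀P, hv₀min⟩ := P.exists_min_image (fun v => c v / g v) hPne
      have hv₀I : v₀ ∈ I := (Finset.mem_filter.mp hv₀P).1
      have hv₀pos : 0 < g v₀ := (Finset.mem_filter.mp hv₀P).2
      set t : ℚ := c v₀ / g v₀ with ht
      have ht0 : 0 ≤ t := div_nonneg (hc v₀ hv₀I) (le_of_lt hv₀pos)
      set c'' : (Fin d → ℚ) → ℚ := fun v => c v - t * g v with hc''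
      have hc''nn : ∀ v ∈ I, 0 ≤ c'' v := by
        intro v hv
        by_cases hgv : 0 < g v
        · have hvP : v ∈ P := Finset.mem_filter.mpr ⟨hv, hgv⟩
          have := hv₀min v hvP
          have h2 : t * g v ≤ c v := by
            rw [← le_div_iff₀ hgv]
            exact this
          simp only [hc'']
          linarith
        · push_neg at hgv
          have : t * g v ≤ 0 := mul_nonpos_of_nonneg_of_nonpos ht0 hgv
          have := hc v hv
          simp only [hc'']
          linarith
      have hsum'' : y = ∑ v ∈ I, c'' v • v := by
        have : ∑ v ∈ I, c'' v • v = (∑ v ∈ I, c v • v) - t • ∑ v ∈ I, g v • v := by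
          rw [Finset.smul_sum, ← Finset.sum_sub_distrib]
          refine Finset.sum_congr rfl (fun v _ => ?_)
          simp only [hc'', sub_smul, smul_smul]
        rw [this, hgsum, smul_zero, sub_zero, hy]
      have hc''v₀ : c'' v₀ = 0 := by
        simp only [hc'', ht]
        field_simp
        ring
      have hyerase : y = ∑ v ∈ I.erase v₀, c'' v • v := by
        rw [hsum'']
        rw [← Finset.add_sum_erase I (fun v => c'' v • v) hv₀I]
        rw [hc''v₀, zero_smul, zero_add]
      obtain ⟨J, hJsub, hJind, hres⟩ :=
        ih (I.erase v₀) (Finset.erase_ssubset hv₀I) c''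
          (fun v hv => hc''nn v (Finset.mem_of_mem_erase hv)) hyerase
      exact ⟨J, hJsub.trans (Finset.erase_subset v₀ I), hJind, hres⟩


lemma castV_smul_add (k : ℕ) (f x : Fin d → ℕ) :
    castV (k • f + x) = (k : ℚ) • castV f + castV x := by
  funext j
  simp only [castV, Pi.add_apply, Pi.smul_apply, smul_eq_mul]
  push_cast
  ring

lemma cone_core (G : Finset (Fin d → ℕ)) (f x : Fin d → ℕ)
    (h : ∀ k : ℕ, ∃ c : (Fin d → ℕ) → ℕ, k • f + x = ∑ g ∈ G, c g • g) :
    ∃ M : ℕ, 0 < M ∧ ∃ c : (Fin d → ℕ) → ℕ, M • f = ∑ g ∈ G, c g • g := by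
  classical
  set G' : Finset (Fin d → ℚ) := G.image castV with hG'
  set tk : ℕ → ℚ := fun k => ((k : ℚ) + 1)⁻¹ with htk
  have htkpos : ∀ k, 0 < tk k := by
    intro k
    simp only [htk]
    positivity
  have key : ∀ k : ℕ, ∃ J, J ⊆ G' ∧
      (∀ g : (Fin d → ℚ) → ℚ, ∑ v ∈ J, g v • v = 0 → ∀ v ∈ J, g v = 0) ∧
      ∃ lam : (Fin d → ℚ) → ℚ, (∀ v ∈ J, 0 ≤ lam v) ∧
        castV f + tk k • castV x = ∑ v ∈ J, lam v • v := by
    intro k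
    obtain ⟨c, hc⟩ := h (k + 1)
    have hcastL : castV ((k+1) • f + x) = ((k : ℚ) + 1) • castV f + castV x := by
      rw [castV_smul_add]
      push_cast
      ring_nf
    have hcastR : castV (∑ g ∈ G, c g • g) = ∑ g ∈ G, ((c g : ℚ)) • castV g := by
      funext j
      simp only [castV, Finset.sum_apply, Pi.smul_apply, smul_eq_mul]
      push_cast
      rfl
    have hkne : ((k : ℚ) + 1) ≠ 0 := by positivity
    have hy : castV f + tk k • castV x = ∑ g ∈ G, (tk k * (c g : ℚ)) • castV g := by
      have hEq : ((k : ℚ) + 1) • castV f + castV x = ∑ g ∈ G, ((c g : ℚ)) • castV g := by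
        rw [← hcastL, ← hcastR, hc]
      calc castV f + tk k • castV x
          = tk k • (((k : ℚ) + 1) • castV f + castV x) := by
            rw [smul_add, smul_smul]
            simp only [htk]
            rw [inv_mul_cancel₀ hkne, one_smul]
        _ = tk k • ∑ g ∈ G, ((c g : ℚ)) • castV g := by rw [hEq]
        _ = ∑ g ∈ G, (tk k * (c g : ℚ)) • castV g := by
            rw [Finset.smul_sum]
            refine Finset.sum_congr rfl (fun g _ => ?_)
            rw [smul_smul]
    set cc : (Fin d → ℚ) → ℚ := Function.extend castV (fun g => tk k * (c g : ℚ)) 0 with hccdef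
    have hccval : ∀ g : Fin d → ℕ, cc (castV g) = tk k * (c g : ℚ) := by
      intro g
      simp only [hccdef]
      rw [castV_inj.extend_apply]
    have hccnn : ∀ v ∈ G', 0 ≤ cc v := by
      intro v hv
      obtain ⟨g, hg, rfl⟩ := Finset.mem_image.mp hv
      rw [hccval]
      positivity
    have hsumG' : ∑ v ∈ G', cc v • v = ∑ g ∈ G, (tk k * (c g : ℚ)) • castV g := by
      rw [Finset.sum_image (fun a _ b _ hab => castV_inj hab)]
      refine Finset.sum_congr rfl (fun g _ => by rw [hccval])
    exact reduce _ G' cc hccnn (hy.trans hsumG'.symm)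
  choose J hJsub hJind lam hlam hsum using key
  -- pigeonhole: one J₀ occurs infinitely often
  have hpigeon : ∃ J₀ : Finset (Fin d → ℚ), {k : ℕ | J k = J₀}.Infinite := by
    set Φ : ℕ → {s // s ∈ G'.powerset} := fun k => ⟨J k, Finset.mem_powerset.mpr (hJsub k)⟩
      with hΦ
    obtain ⟨b, hb⟩ := Finite.exists_infinite_fiber Φ
    refine ⟨b.val, Set.Infinite.mono ?_ (Set.infinite_coe_iff.mp hb)⟩
    intro k hk
    simp only [Set.mem_preimage, Set.mem_singleton_iff] at hk
    simp only [Set.mem_setOf_eq]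
    rw [← hk]
  obtain ⟨J₀, hK⟩ := hpigeon
  have hKbig : ∀ N : ℕ, ∃ k, J k = J₀ ∧ N ≤ k := by
    intro N
    by_contra hcon
    push_neg at hcon
    refine hK (Set.Finite.subset (Set.finite_Iio N) ?_)
    intro k hk
    simp only [Set.mem_setOf_eq] at hk
    exact hcon k hk
  obtain ⟨k₁, hk₁, -⟩ := hKbig 0
  obtain ⟨k₂, hk₂, hk₂ge⟩ := hKbig (k₁ + 1)
  have hk₁₂ : k₁ < k₂ := by omega
  have hJ₀sub : J₀ ⊆ G' := hk₁ ▸ hJsub k₁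
  have hind : ∀ g : (Fin d → ℚ) → ℚ, ∑ v ∈ J₀, g v • v = 0 → ∀ v ∈ J₀, g v = 0 :=
    hk₁ ▸ hJind k₁
  set Msp := Submodule.span ℚ ((J₀ : Set (Fin d → ℚ))) with hMsp
  have hmem : ∀ k, J k = J₀ → castV f + tk k • castV x ∈ Msp := by
    intro k hk
    rw [hsum k, hk]
    exact Submodule.sum_mem _ (fun v hv =>
      Submodule.smul_mem _ _ (Submodule.subset_span (Finset.mem_coe.mpr hv)))
  have htne : tk k₁ ≠ tk k₂ := by
    simp only [htk]
    intro hEq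
    have h1 : ((k₁ : ℚ) + 1) = ((k₂ : ℚ) + 1) := by
      have e1 : ((k₁:ℚ)+1) ≠ 0 := by positivity
      have e2 : ((k₂:ℚ)+1) ≠ 0 := by positivity
      field_simp at hEq
      linarith [hEq]
    have : (k₁ : ℚ) = k₂ := by linarith
    have : k₁ = k₂ := by exact_mod_cast this
    omega
  have hxspan : castV x ∈ Msp := by
    have h1 := hmem k₁ hk₁
    have h2 := hmem k₂ hk₂
    have hEq : (tk k₁ - tk k₂) • castV x
        = (castV f + tk k₁ • castV x) - (castV f + tk k₂ • castV x) := by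
      rw [sub_smul]
      abel
    have hmem' : (tk k₁ - tk k₂) • castV x ∈ Msp := hEq ▸ sub_mem h1 h2
    have hne' : tk k₁ - tk k₂ ≠ 0 := sub_ne_zero.mpr htne
    have := Submodule.smul_mem Msp (tk k₁ - tk k₂)⁻¹ hmem'
    rwa [smul_smul, inv_mul_cancel₀ hne', one_smul] at this
  have hfspan : castV f ∈ Msp := by
    have := sub_mem (hmem k₁ hk₁) (Submodule.smul_mem Msp (tk k₁) hxspan)
    simpa using this
  obtain ⟨ξ, -, hξ⟩ := Submodule.mem_span_finset.mp hxspan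
  obtain ⟨μ, -, hμ⟩ := Submodule.mem_span_finset.mp hfspan
  have hcoord : ∀ k, J k = J₀ → ∀ v ∈ J₀, μ v = lam k v - tk k * ξ v := by
    intro k hk
    have hzero : ∑ v ∈ J₀, (μ v + tk k * ξ v - lam k v) • v = 0 := by
      have e1 : ∑ v ∈ J₀, (μ v + tk k * ξ v - lam k v) • v
          = (∑ v ∈ J₀, μ v • v) + tk k • (∑ v ∈ J₀, ξ v • v) - ∑ v ∈ J₀, lam k v • v := by
        rw [Finset.smul_sum, ← Finset.sum_add_distrib, ← Finset.sum_sub_distrib]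
        refine Finset.sum_congr rfl (fun v _ => ?_)
        rw [sub_smul, add_smul, smul_smul]
      rw [e1, hμ, hξ]
      have e2 : ∑ v ∈ J₀, lam k v • v = castV f + tk k • castV x := by
        rw [hsum k, hk]
      rw [e2]
      abel
    intro v hv
    have := hind _ hzero v hv
    linarith
  have hμnn : ∀ v ∈ J₀, 0 ≤ μ v := by
    intro v hv
    by_contra hneg
    push_neg at hneg
    rcases le_or_gt (ξ v) 0 with hξv | hξv
    · have h1 := hcoord k₁ hk₁ v hv
      have h2 : 0 ≤ lam k₁ v := hlam k₁ v (hk₁ ▸ hv)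
      nlinarith [htkpos k₁]
    · obtain ⟨k, hkJ, hkge⟩ := hKbig (Nat.ceil (ξ v / (-μ v)))
      have h1 := hcoord k hkJ v hv
      have h2 : 0 ≤ lam k v := hlam k v (hkJ ▸ hv)
      have hbig : ξ v / (-μ v) < (k : ℚ) + 1 := by
        calc ξ v / (-μ v) ≤ (Nat.ceil (ξ v / (-μ v)) : ℚ) := Nat.le_ceil _
          _ ≤ (k : ℚ) := by exact_mod_cast hkge
          _ < (k : ℚ) + 1 := by linarith
      have hμpos : 0 < -μ v := by linarith
      have h3 : ξ v < ((k : ℚ) + 1) * (-μ v) := by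
        rw [div_lt_iff₀ hμpos] at hbig
        linarith [hbig]
      have h4 : tk k * ξ v < -μ v := by
        have hkpos : (0:ℚ) < (k : ℚ) + 1 := by positivity
        have : tk k * ξ v = ξ v / ((k : ℚ) + 1) := by
          simp only [htk]
          ring
        rw [this, div_lt_iff₀ hkpos]
        linarith [h3]
      linarith
  -- clear denominators
  set M : ℕ := ∏ v ∈ J₀, (μ v).den with hMdef
  have hMpos : 0 < M := Finset.prod_pos (fun v _ => (μ v).pos)
  have hnat : ∀ v ∈ J₀, ∃ n : ℕ, (n : ℚ) = μ v * M := by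
    intro v hv
    exact rat_clear (μ v) (hμnn v hv) M (Finset.dvd_prod_of_mem _ hv)
  set nn : (Fin d → ℚ) → ℕ := fun v => (μ v * M).num.toNat with hnn
  have hnnval : ∀ v ∈ J₀, ((nn v : ℚ)) = μ v * M := by
    intro v hv
    obtain ⟨n, hn⟩ := hnat v hv
    simp only [hnn]
    rw [← hn]
    simp
  set cfin : (Fin d → ℕ) → ℕ := fun g => if castV g ∈ J₀ then nn (castV g) else 0 with hcfin
  refine ⟨M, hMpos, cfin, castV_inj ?_⟩
  have hL : castV (M • f) = (M : ℚ) • castV f := by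
    funext j
    simp only [castV, Pi.smul_apply, smul_eq_mul]
    push_cast
    ring
  have hR : castV (∑ g ∈ G, cfin g • g) = ∑ g ∈ G, ((cfin g : ℚ)) • castV g := by
    funext j
    simp only [castV, Finset.sum_apply, Pi.smul_apply, smul_eq_mul]
    push_cast
    rfl
  rw [hL, hR]
  have step1 : (M : ℚ) • castV f = ∑ v ∈ J₀, ((nn v : ℚ)) • v := by
    rw [← hμ, Finset.smul_sum]
    refine Finset.sum_congr rfl (fun v hv => ?_)
    rw [smul_smul, hnnval v hv, mul_comm]
  rw [step1]
  have step2 : ∑ g ∈ G, ((cfin g : ℚ)) • castV g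
      = ∑ v ∈ G', (if v ∈ J₀ then ((nn v : ℚ)) else 0) • v := by
    rw [Finset.sum_image (fun a _ b _ hab => castV_inj hab)]
    refine Finset.sum_congr rfl (fun g _ => ?_)
    simp only [hcfin]
    split <;> simp
  rw [step2]
  have step3 : ∑ v ∈ G', (if v ∈ J₀ then ((nn v : ℚ)) else 0) • v
      = ∑ v ∈ J₀, ((nn v : ℚ)) • v := by
    have hsw : ∀ v : Fin d → ℚ, (if v ∈ J₀ then ((nn v : ℚ)) else 0) • v
        = (if v ∈ J₀ then ((nn v : ℚ)) • v else 0) := by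
      intro v
      split <;> simp
    simp_rw [hsw]
    rw [Finset.sum_ite_mem, Finset.inter_eq_right.mpr hJ₀sub]
  rw [step3]




section Main

variable {S : AddSubmonoid (Fin d → ℕ)} {x : Fin d → ℕ}

/-- Membership criterion for the set `T = 𝔠_S ∩ Maximals Ap(S,x)`. -/
lemma mem_T_of (hx : x ∈ S) (hx0 : x ≠ 0) {f : Fin d → ℕ} (hfH : f ∈ gapSet S)
    (hfPF : ∀ s ∈ S, s ≠ 0 → f + s ∈ S) (hfC : ∀ c ∈ coneSet S, f + x + c ∈ S) :
    f + x ∈ conductorSet S ∩ maximalsL (S : Set (Fin d → ℕ)) (aperySet S {x}) := by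
  have hfxS : f + x ∈ S := hfPF x hx hx0
  have hfxAp : f + x ∈ aperySet S {x} := by
    refine ⟨hfxS, ?_⟩
    rintro ⟨x', hx', t, ht, hEq⟩
    rw [Set.mem_singleton_iff] at hx'
    subst hx'
    have : f = t := by
      have := add_right_cancel hEq
      exact this
    exact hfH.2 (this ▸ ht)
  refine ⟨⟨hfxS, hfC⟩, hfxAp, ?_⟩
  rintro b hb ⟨s, hsS, rfl⟩
  by_cases hs0 : s = 0
  · rw [hs0, add_zero]
  · exfalso
    refine hb.2 ⟨x, rfl, f + s, hfPF s hsS hs0, ?_⟩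
    rw [add_right_comm]

/-- A maximal gap (w.r.t. `≤_C`) stays in `S` after adding any nonzero cone element. -/
lemma gap_max_add {f : Fin d → ℕ} (hfH : f ∈ gapSet S)
    (hmax : ∀ b ∈ gapSet S, leL (coneSet S) f b → f = b) :
    ∀ c ∈ coneSet S, c ≠ 0 → f + c ∈ S := by
  intro c hc hc0
  by_contra hnot
  have hfc : f + c ∈ gapSet S := ⟨cone_add hfH.1 hc, hnot⟩
  have := hmax _ hfc ⟨c, hc, rfl⟩
  have hc0' : c = 0 := by
    funext j
    have := congrFun this j
    simp only [Pi.add_apply, Pi.zero_apply] at *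
    omega
  exact hc0 hc0'

lemma maximal_gap_mem_T (hx : x ∈ S) (hx0 : x ≠ 0) {f : Fin d → ℕ} (hfH : f ∈ gapSet S)
    (hmax : ∀ b ∈ gapSet S, leL (coneSet S) f b → f = b) :
    f + x ∈ conductorSet S ∩ maximalsL (S : Set (Fin d → ℕ)) (aperySet S {x}) := by
  refine mem_T_of hx hx0 hfH ?_ ?_
  · intro s hs hs0
    exact gap_max_add hfH hmax s (subset_cone hs) hs0
  · intro c hc
    have hxc : x + c ∈ coneSet S := cone_add (subset_cone hx) hc
    have hxc0 : x + c ≠ 0 := fun h => hx0 (pi_add_eq_zero h)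
    rw [add_assoc]
    exact gap_max_add hfH hmax _ hxc hxc0

/-- Descent: every element of `T` has the form `f + x` with `f ∉ S` pseudo-Frobenius-like. -/
lemma descent (hne : (gapSet S).Nonempty) (hx : x ∈ S) (hx0 : x ≠ 0) {w : Fin d → ℕ}
    (hw : w ∈ conductorSet S ∩ maximalsL (S : Set (Fin d → ℕ)) (aperySet S {x})) :
    ∃ f : Fin d → ℕ, w = f + x ∧ f ∉ S ∧ ∀ s ∈ S, s ≠ 0 → f + s ∈ S := by
  obtain ⟨⟨hwS, hwCond⟩, hwAp, hwMax⟩ := hw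
  have notAp : ∀ t ∈ S, t ≠ 0 → ∃ t' ∈ S, w + t = t' + x := by
    intro t ht ht0
    by_cases hAp : w + t ∈ aperySet S {x}
    · exfalso
      have := hwMax _ hAp ⟨t, ht, rfl⟩
      have : t = 0 := by
        funext j
        have := congrFun this j
        simp only [Pi.add_apply, Pi.zero_apply] at *
        omega
      exact ht0 this
    · simp only [aperySet, Set.mem_setOf_eq, not_and, not_not] at hAp
      obtain ⟨x', hx', t', ht', hEq⟩ := hAp (S.add_mem hwS ht)
      rw [Set.mem_singleton_iff] at hx'
      subst hx'
      exact ⟨t', ht', hEq⟩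
  have hw0 : w ≠ 0 := by
    rintro rfl
    obtain ⟨h, hh⟩ := hne
    refine hh.2 ?_
    have := hwCond h hh.1
    rwa [zero_add] at this
  by_cases hxw : x ≤ w
  · refine ⟨w - x, ?_, ?_, ?_⟩
    · funext j
      simp only [Pi.add_apply, Pi.sub_apply]
      have h2 : x j ≤ w j := hxw j
      omega
    · intro hmem
      refine hwAp.2 ⟨x, rfl, w - x, hmem, ?_⟩
      funext j
      simp only [Pi.add_apply, Pi.sub_apply]
      have h2 : x j ≤ w j := hxw j
      omega
    · intro s hs hs0
      obtain ⟨t', ht', hEq⟩ := notAp s hs hs0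
      have : (w - x) + s = t' := by
        funext j
        have h1 := congrFun hEq j
        have h2 : x j ≤ w j := hxw j
        simp only [Pi.add_apply, Pi.sub_apply] at *
        omega
      exact this ▸ ht'
  · exfalso
    have hj : ∃ j, w j < x j := by
      by_contra hcon
      push_neg at hcon
      exact hxw (fun j => hcon j)
    obtain ⟨j, hj⟩ := hj
    -- Chain 1: find r ∈ S with x = w + r
    have claimA : ∀ n : ℕ, ∀ t, t ∈ S → t ≠ 0 → t j ≤ n → ∃ r ∈ S, x = w + r := by
      intro n
      induction n with
      | zero =>
        intro t ht ht0 htj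
        obtain ⟨t', ht', hEq⟩ := notAp t ht ht0
        exfalso
        have := congrFun hEq j
        simp only [Pi.add_apply] at this
        omega
      | succ n ih =>
        intro t ht ht0 htj
        obtain ⟨t', ht', hEq⟩ := notAp t ht ht0
        by_cases h0 : t' = 0
        · refine ⟨t, ht, ?_⟩
          rw [hEq, h0, zero_add]
        · have hlt : t' j < t j := by
            have := congrFun hEq j
            simp only [Pi.add_apply] at this
            omega
          exact ih t' ht' h0 (by omega)
    obtain ⟨r, hrS, hr⟩ := claimA (w j) w hwS hw0 le_rfl
    have hrj : 1 ≤ r j := by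
      have := congrFun hr j
      simp only [Pi.add_apply] at this
      omega
    -- Chain 2: impossible descent
    have claimB : ∀ n : ℕ, ∀ u : Fin d → ℕ, (∀ c ∈ coneSet S, u + c ∈ S) → u j ≤ n → False := by
      intro n
      induction n with
      | zero =>
        intro u hu huj
        have huS : u ∈ S := by simpa using hu 0 cone_zero
        have hu0 : u ≠ 0 := by
          rintro rfl
          obtain ⟨h, hh⟩ := hne
          exact hh.2 (by simpa using hu h hh.1)
        obtain ⟨t', ht', hEq⟩ := notAp u huS hu0
        have hEq2 : u = t' + r := by
          apply add_left_cancel (a := w)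
          rw [hEq, hr]
          abel
        have := congrFun hEq2 j
        simp only [Pi.add_apply] at this
        omega
      | succ n ih =>
        intro u hu huj
        have huS : u ∈ S := by simpa using hu 0 cone_zero
        have hu0 : u ≠ 0 := by
          rintro rfl
          obtain ⟨h, hh⟩ := hne
          exact hh.2 (by simpa using hu h hh.1)
        obtain ⟨t', ht', hEq⟩ := notAp u huS hu0
        have hEq2 : u = t' + r := by
          apply add_left_cancel (a := w)
          rw [hEq, hr]
          abel
        have ht'prop : ∀ c ∈ coneSet S, t' + c ∈ S := by
          intro c hc
          have hucS : u + c ∈ S := hu c hc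
          have huc0 : u + c ≠ 0 := by
            intro hzero
            exact hu0 (pi_add_eq_zero hzero)
          obtain ⟨t'', ht'', hEq3⟩ := notAp (u + c) hucS huc0
          have h4 : u + c = t'' + r := by
            apply add_left_cancel (a := w)
            rw [hEq3, hr]
            abel
          have h5 : (t' + c) + r = t'' + r := by
            rw [← h4, hEq2]
            abel
          have h6 := add_right_cancel h5
          exact h6 ▸ ht''
        have hlt : t' j < u j := by
          have := congrFun hEq2 j
          simp only [Pi.add_apply] at this
          omega
        exact ih t' ht'prop (by omega)
    exact claimB (w j) w hwCond le_rfl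

/-- If `f + s ∈ S` for all nonzero `s ∈ S`, then `f` lies in the cone. -/
lemma cone_of_translates (hfg : S.FG) (hx : x ∈ S) (hx0 : x ≠ 0) {f : Fin d → ℕ}
    (hstep : ∀ s ∈ S, s ≠ 0 → f + s ∈ S) : f ∈ coneSet S := by
  have hk : ∀ k : ℕ, k • f + x ∈ S := by
    intro k
    induction k with
    | zero => simpa using hx
    | succ k ihk =>
      have hne0 : k • f + x ≠ 0 := by
        intro h
        exact hx0 (by
          funext j
          have := congrFun h j
          simp only [Pi.add_apply, Pi.smul_apply, Pi.zero_apply, smul_eq_mul] at *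
          omega)
      have := hstep _ ihk hne0
      have hEq : (k + 1) • f + x = f + (k • f + x) := by
        rw [succ_nsmul]
        abel
      rw [hEq]
      exact this
  obtain ⟨G, hG⟩ := hfg
  have hcombo : ∀ k : ℕ, ∃ c : (Fin d → ℕ) → ℕ, k • f + x = ∑ g ∈ G, c g • g := by
    intro k
    exact mem_fg_combo G (by rw [hG]; exact hk k)
  obtain ⟨M, hM, c, hc⟩ := cone_core G f x hcombo
  refine mem_coneSet_iff.mpr ⟨M, hM, ?_⟩
  rw [hc, ← hG]
  exact AddSubmonoid.sum_mem _ (fun g hg =>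
    AddSubmonoid.nsmul_mem _ (AddSubmonoid.subset_closure hg) _)

end Main


end CS12aux

open CS12aux in
/-- The reduced type `s(S,x)` equals `1` iff `H(S)` has a greatest
element `F` with respect to `≤_{C(S)}` and every other pseudo-Frobenius element `f`
satisfies `f ≤_{C(S)} F - x`. -/
theorem stmt12 {d : ℕ} (hd : 0 < d) (S : AddSubmonoid (Fin d → ℕ)) (hfg : S.FG)
    (hfin : (gapSet S).Finite) (hne : (gapSet S).Nonempty)
    (x : Fin d → ℕ) (hx : x ∈ S) (hx0 : x ≠ 0) :
    (conductorSet S ∩ maximalsL (S : Set (Fin d → ℕ)) (aperySet S {x})).ncard = 1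
    ↔ ∃ F ∈ gapSet S, (∀ h ∈ gapSet S, leL (coneSet S) h F) ∧
        ∀ f ∈ pseudoFrobenius S, f ≠ F → ∃ c ∈ coneSet S, f + x + c = F := by
  have hadd : ∀ a b : Fin d → ℕ, a ∈ coneSet S → b ∈ coneSet S → a + b ∈ coneSet S :=
    fun a b ha hb => cone_add ha hb
  have hmaxex := exists_maximal (C := coneSet S) cone_zero hadd hfin
  constructor
  · intro hcard
    obtain ⟨w₀, hw₀⟩ := Set.ncard_eq_one.mp hcard
    -- a maximal gap exists
    obtain ⟨h₀, hh₀⟩ := hne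
    obtain ⟨F, hFH, hF1, hFmax⟩ := hmaxex h₀ hh₀
    have hFT : F + x ∈ conductorSet S ∩ maximalsL (S : Set (Fin d → ℕ)) (aperySet S {x}) :=
      maximal_gap_mem_T hx hx0 hFH hFmax
    have hFw₀ : F + x = w₀ := by
      have := hw₀ ▸ hFT
      simpa using this
    have hgreat : ∀ h ∈ gapSet S, leL (coneSet S) h F := by
      intro h hh
      obtain ⟨m, hmH, hm1, hmmax⟩ := hmaxex h hh
      have hmT : m + x ∈ conductorSet S ∩ maximalsL (S : Set (Fin d → ℕ)) (aperySet S {x}) :=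
        maximal_gap_mem_T hx hx0 hmH hmmax
      have hmw₀ : m + x = w₀ := by
        have := hw₀ ▸ hmT
        simpa using this
      have : m = F := by
        have := hmw₀.trans hFw₀.symm
        exact add_right_cancel this
      exact this ▸ hm1
    refine ⟨F, hFH, hgreat, ?_⟩
    intro f hfPF hfne
    by_contra hcon
    push_neg at hcon
    have hfC : ∀ c ∈ coneSet S, f + x + c ∈ S := by
      intro c hc
      by_contra hnot
      have hmem : f + x + c ∈ gapSet S := by
        refine ⟨?_, hnot⟩
        exact cone_add (cone_add hfPF.1.1 (subset_cone hx)) hc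
      obtain ⟨c', hc', hEq⟩ := hgreat _ hmem
      refine hcon (c + c') (cone_add hc hc') ?_
      rw [← add_assoc, ← hEq]
    have hfT : f + x ∈ conductorSet S ∩ maximalsL (S : Set (Fin d → ℕ)) (aperySet S {x}) :=
      mem_T_of hx hx0 hfPF.1 hfPF.2 hfC
    have : f + x = w₀ := by
      have := hw₀ ▸ hfT
      simpa using this
    have : f = F := add_right_cancel (this.trans hFw₀.symm)
    exact hfne this
  · rintro ⟨F, hFH, hgreat, hPF⟩
    have hFmax : ∀ b ∈ gapSet S, leL (coneSet S) F b → F = b := by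
      intro b hb hFb
      exact leL_antisymm hFb (hgreat b hb)
    have hFT : F + x ∈ conductorSet S ∩ maximalsL (S : Set (Fin d → ℕ)) (aperySet S {x}) :=
      maximal_gap_mem_T hx hx0 hFH hFmax
    have huniq : ∀ w ∈ conductorSet S ∩ maximalsL (S : Set (Fin d → ℕ)) (aperySet S {x}),
        w = F + x := by
      intro w hw
      obtain ⟨f, rfl, hfnS, hfstep⟩ := descent hne hx hx0 hw
      have hfC : f ∈ coneSet S := cone_of_translates hfg hx hx0 hfstep
      have hfH : f ∈ gapSet S := ⟨hfC, hfnS⟩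
      have hfPF : f ∈ pseudoFrobenius S := ⟨hfH, hfstep⟩
      by_cases hfF : f = F
      · rw [hfF]
      · exfalso
        obtain ⟨c, hc, hEq⟩ := hPF f hfPF hfF
        have : F ∈ S := by
          rw [← hEq]
          exact hw.1.2 c hc
        exact hFH.2 this
    have : conductorSet S ∩ maximalsL (S : Set (Fin d → ℕ)) (aperySet S {x}) = {F + x} := by
      apply Set.eq_singleton_iff_unique_mem.mpr
      exact ⟨hFT, huniq⟩
    rw [this]
    exact Set.ncard_singleton _
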